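/- Let G' be the Type A Whitney flip of a simple graph G along (H, v1, v2). Then G' has the same vertex set as G, the same number of edges as G, and G' is connected if and only if G is connected. Consequently, when G is connected, the Betti numbers e − v + 1 of G and G' (where e is the number of edges and v the number of vertices) are equal. -/

import Mathlib

open SimpleGraph

/-- The Type A Whitney flip of `G` along `(H, v1, v2)`: edges with both endpoints in `H`
are mapped by the swap of `v1` and `v2`; all other edges are kept. -/
def typeAFlip {V : Type*} [DecidableEq V] (G : SimpleGraph V) (v1 v2 : V) (H : Set V) :
    SimpleGraph V where
  Adj a b :=
    (Equiv.swap v1 v2 a ∈ H ∧ Equiv.swap v1 v2 b ∈ H ∧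
      G.Adj (Equiv.swap v1 v2 a) (Equiv.swap v1 v2 b)) ∨
    (¬(a ∈ H ∧ b ∈ H) ∧ G.Adj a b)
  symm := by
    refine ⟨?_⟩
    rintro a b (⟨ha, hb, h⟩ | ⟨hn, h⟩)
    · exact Or.inl ⟨hb, ha, h.symm⟩
    · exact Or.inr ⟨fun ⟨hb', ha'⟩ => hn ⟨ha', hb'⟩, h.symm⟩
  loopless := by
    refine ⟨?_⟩
    rintro a (⟨_, _, h⟩ | ⟨_, h⟩) <;> exact G.loopless.irrefl _ h

private lemma reach_aux {V : Type*} {G G' : SimpleGraph V} {H : Set V}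
    (hE : ∀ a b, G.Adj a b → G'.Adj a b ∨ (a ∈ H ∧ b ∈ H))
    (hH : ∀ a ∈ H, ∀ b ∈ H, G'.Reachable a b) :
    ∀ a b : V, G.Reachable a b → G'.Reachable a b := by
  intro a b ⟨w⟩
  induction w with
  | nil => exact Reachable.refl _
  | cons h p ih =>
    refine Reachable.trans ?_ ih
    rcases hE _ _ h with h' | ⟨ha, hb⟩
    · exact h'.reachable
    · exact hH _ ha _ hb

/-- the Type A Whitney flip has the same vertex set (both graphs live on
`V`), the same number of edges, preserves connectedness, and hence preserves the Betti
number `e - v + 1` of a connected graph. -/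
theorem typeAFlip_edgeCount_connected_betti {V : Type*} [Fintype V] [DecidableEq V]
    (G : SimpleGraph V) (v1 v2 : V) (hne : v1 ≠ v2) (hadj : G.Adj v1 v2)
    (H : Set V) (h1 : v1 ∈ H) (h2 : v2 ∈ H) (hHconn : (G.induce H).Connected)
    (hHedge : ∀ x y : V, G.Adj x y → x ∈ H \ ({v1, v2} : Set V) → y ∈ H) :
    (typeAFlip G v1 v2 H).edgeSet.ncard = G.edgeSet.ncard ∧
      ((typeAFlip G v1 v2 H).Connected ↔ G.Connected) ∧
      (G.Connected →
        ((typeAFlip G v1 v2 H).edgeSet.ncard : ℤ) - Fintype.card V + 1 =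
          (G.edgeSet.ncard : ℤ) - Fintype.card V + 1) := by
  classical
  set σ : V ≃ V := Equiv.swap v1 v2 with hσdef
  set G' := typeAFlip G v1 v2 H with hG'def
  have hσσ : ∀ x, σ (σ x) = x := fun x => Equiv.swap_apply_self v1 v2 x
  have hmemσ : ∀ x, x ∈ H → σ x ∈ H := by
    intro x hx
    rw [hσdef]
    rw [Equiv.swap_apply_def]
    split_ifs with h h'
    · exact h2
    · exact h1
    · exact hx
  have hiff : ∀ x, σ x ∈ H ↔ x ∈ H := by
    intro x
    refine ⟨fun h => ?_, hmemσ x⟩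
    have := hmemσ _ h
    rwa [hσσ] at this
  -- adjacency of v1 v2 in the flip
  have hadj' : G'.Adj v1 v2 := by
    refine Or.inl ?_
    simp only [hσdef, Equiv.swap_apply_left, Equiv.swap_apply_right]
    exact ⟨h2, h1, hadj.symm⟩
  have hstep : ∀ a, G'.Reachable a (σ a) := by
    intro a
    rcases eq_or_ne a v1 with rfl | ha1
    · simp only [hσdef, Equiv.swap_apply_left]; exact hadj'.reachable
    rcases eq_or_ne a v2 with rfl | ha2
    · simp only [hσdef, Equiv.swap_apply_right]; exact hadj'.symm.reachable
    · simp only [hσdef, Equiv.swap_apply_of_ne_of_ne ha1 ha2]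
      exact Reachable.refl a
  -- reachability inside H, in G and in G'
  have hHG : ∀ a ∈ H, ∀ b ∈ H, G.Reachable a b := by
    intro a ha b hb
    have := (hHconn.preconnected ⟨a, ha⟩ ⟨b, hb⟩).map
      (SimpleGraph.Embedding.induce H).toHom
    exact this
  have hHG' : ∀ a ∈ H, ∀ b ∈ H, G'.Reachable a b := by
    intro a ha b hb
    have h' : G'.Reachable (σ a) (σ b) := by
      refine Reachable.map ⟨fun x => σ x.val, ?_⟩ (hHconn.preconnected ⟨a, ha⟩ ⟨b, hb⟩)
      intro x y h
      refine Or.inl ?_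
      rw [hσσ, hσσ]
      exact ⟨x.2, y.2, h⟩
    exact ((hstep a).trans h').trans (hstep b).symm
  -- edge conditions
  have hE1 : ∀ a b, G.Adj a b → G'.Adj a b ∨ (a ∈ H ∧ b ∈ H) := by
    intro a b h
    by_cases hab : a ∈ H ∧ b ∈ H
    · exact Or.inr hab
    · exact Or.inl (Or.inr ⟨hab, h⟩)
  have hE2 : ∀ a b, G'.Adj a b → G.Adj a b ∨ (a ∈ H ∧ b ∈ H) := by
    rintro a b (⟨ha, hb, _⟩ | ⟨_, h⟩)
    · exact Or.inr ⟨(hiff a).mp ha, (hiff b).mp hb⟩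
    · exact Or.inl h
  -- connectedness
  have hconn : G'.Connected ↔ G.Connected := by
    rw [connected_iff, connected_iff]
    constructor
    · rintro ⟨hp, hn⟩
      exact ⟨fun a b => reach_aux hE2 hHG a b (hp a b), hn⟩
    · rintro ⟨hp, hn⟩
      exact ⟨fun a b => reach_aux hE1 hHG' a b (hp a b), hn⟩
  -- edge count via the involution on Sym2
  set f : Sym2 V → Sym2 V := fun z => if ∀ x ∈ z, x ∈ H then Sym2.map σ z else z with hfdef
  have hinv : Function.Involutive f := by
    intro z
    by_cases hz : ∀ x ∈ z, x ∈ H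
    · have hz' : ∀ x ∈ Sym2.map σ z, x ∈ H := by
        intro x hx
        obtain ⟨y, hy, rfl⟩ := Sym2.mem_map.mp hx
        exact hmemσ _ (hz _ hy)
      rw [hfdef]
      simp only [if_pos hz, if_pos hz', Sym2.map_map]
      have : (⇑σ ∘ ⇑σ) = id := by funext x; exact hσσ x
      rw [this, Sym2.map_id, id_eq]
    · rw [hfdef]
      simp only [if_neg hz]
  have hedge : G'.edgeSet = f '' G.edgeSet := by
    ext z
    refine Sym2.ind (fun a b => ?_) z
    simp only [Set.mem_image, mem_edgeSet]
    constructor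
    · rintro (⟨ha, hb, h⟩ | ⟨hab, h⟩)
      · refine ⟨s(σ a, σ b), h, ?_⟩
        rw [hfdef]
        have hc : ∀ x ∈ s(σ a, σ b), x ∈ H := by
          intro x hx
          rcases Sym2.mem_iff.mp hx with rfl | rfl
          · exact ha
          · exact hb
        simp only [if_pos hc, Sym2.map_pair_eq, hσσ]
      · refine ⟨s(a, b), h, ?_⟩
        rw [hfdef]
        have hc : ¬ ∀ x ∈ s(a, b), x ∈ H := by
          intro hc
          exact hab ⟨hc a (Sym2.mem_mk_left a b), hc b (Sym2.mem_mk_right a b)⟩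
        simp only [if_neg hc]
    · rintro ⟨w, hw, hfw⟩
      refine Sym2.ind (fun x y hxy hf => ?_) w hw hfw
      rw [hfdef] at hf
      by_cases hc : ∀ u ∈ s(x, y), u ∈ H
      · simp only [if_pos hc, Sym2.map_pair_eq] at hf
        rcases Sym2.eq_iff.mp hf with ⟨rfl, rfl⟩ | ⟨rfl, rfl⟩
        · exact Or.inl ⟨by rw [hσσ]; exact hc x (Sym2.mem_mk_left x y),
            by rw [hσσ]; exact hc y (Sym2.mem_mk_right x y),
            by rw [hσσ, hσσ]; exact hxy⟩
        · exact Or.inl ⟨by rw [hσσ]; exact hc y (Sym2.mem_mk_right x y),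
            by rw [hσσ]; exact hc x (Sym2.mem_mk_left x y),
            by rw [hσσ, hσσ]; exact hxy.symm⟩
      · simp only [if_neg hc] at hf
        rcases Sym2.eq_iff.mp hf with ⟨rfl, rfl⟩ | ⟨rfl, rfl⟩
        · exact Or.inr ⟨fun h => hc (fun u hu => by
            rcases Sym2.mem_iff.mp hu with rfl | rfl
            exacts [h.1, h.2]), hxy⟩
        · exact Or.inr ⟨fun h => hc (fun u hu => by
            rcases Sym2.mem_iff.mp hu with rfl | rfl
            exacts [h.2, h.1]), hxy.symm⟩
  have hcount : G'.edgeSet.ncard = G.edgeSet.ncard := by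
    rw [hedge, Set.ncard_image_of_injective _ hinv.injective]
  exact ⟨hcount, hconn, fun _ => by rw [hcount]⟩
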